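/- arXiv:2502.00478 — 2 statements merged into one kernel-verified Lean document; each statement's English description precedes it below -/
import Mathlib

section
/- Fix n ≥ 1, a complex parameter q with |q| < 1, and inhomogeneity parameters a_1,…,a_{n-1}, b_1,…,b_{n-1} ∈ ℂ with |a_i| < 1 and |b_i| < 1 for all i. For any partition λ = (λ_1 ≥ ⋯ ≥ λ_n) with λ_n > 0, the spin q-Whittaker polynomials satisfy the shift property 𝕗_{(λ_1,…,λ_n)}(x_1,…,x_n | a, b) = (x_1 ⋯ x_n) · 𝕗_{(λ_1−1,…,λ_n−1)}(x_1,…,x_n | a, b). -/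
open scoped BigOperators

noncomputable section SpinQW

/-- Finite `q`-Pochhammer symbol `(z;q)_n` with integer index `n`. -/
def qPochInt (q z : ℂ) (n : ℤ) : ℂ :=
  if 0 ≤ n then ∏ i ∈ Finset.range n.toNat, (1 - z * q ^ i)
  else (∏ i ∈ Finset.range (-n).toNat, (1 - z * q ^ (n + (i : ℤ))))⁻¹

/-- Infinite `q`-Pochhammer symbol `(z;q)_∞`. -/
def qPochInf (q z : ℂ) : ℂ := ∏' i : ℕ, (1 - z * q ^ i)

/-- Extension of a `Fin n`-tuple of naturals by zero. -/
def extN {n m : ℕ} (f : Fin n → Fin m) : ℕ → ℕ :=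
  fun i => if h : i < n then (f ⟨i, h⟩ : ℕ) else 0

/-- Extension of a `Fin n`-tuple of complex numbers by `1`. -/
def extC {n : ℕ} (z : Fin n → ℂ) : ℕ → ℂ :=
  fun i => if h : i < n then z ⟨i, h⟩ else 1

/-- Interlacing relation `μ ≼ λ` between partitions (0-based indexing). -/
def Interlaces (mu lam : ℕ → ℕ) : Prop := ∀ i, mu i ≤ lam i ∧ lam (i + 1) ≤ mu i

open Classical in
/-- Skew spin `q`-Whittaker polynomial `𝔽_{λ/μ}(x | a_1,…,a_n, b_1,…,b_n)`
(0-based indexing of parameters and parts). -/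
def skewF (q : ℂ) (n : ℕ) (a b : ℕ → ℂ) (lam mu : ℕ → ℕ) (x : ℂ) : ℂ :=
  if Interlaces mu lam then
    x ^ (∑ i ∈ Finset.range n, (lam i - mu i))
      * ∏ r ∈ Finset.range n,
          qPochInt q (a r / x) ((lam r : ℤ) - (mu r : ℤ))
            * qPochInt q (x * b r) ((mu r : ℤ) - (lam (r + 1) : ℤ))
            * qPochInt q q ((lam r : ℤ) - (lam (r + 1) : ℤ))
            / (qPochInt q q ((lam r : ℤ) - (mu r : ℤ))
                * qPochInt q q ((mu r : ℤ) - (lam (r + 1) : ℤ))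
                * qPochInt q (a r * b r) ((lam r : ℤ) - (lam (r + 1) : ℤ)))
  else 0

open Classical in
/-- The `n`-variate spin `q`-Whittaker polynomial `𝔽_λ(x_1,…,x_n | a, b)`,
defined through the branching rule. -/
def Fpoly (q : ℂ) : ℕ → (ℕ → ℂ) → (ℕ → ℂ) → (ℕ → ℕ) → (ℕ → ℂ) → ℂ
  | 0, _, _, lam, _ => if ∀ i, lam i = 0 then 1 else 0
  | n + 1, a, b, lam, x =>
      ∑ m : Fin n → Fin (lam 0 + 1),
        Fpoly q n (fun i => a (i + 1)) b (extN m) x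
          * skewF q (n + 1) a b lam (extN m) (x n)

/-- The spin `q`-Whittaker polynomial `𝕗_λ(x_1,…,x_n | a_1,…,a_{n-1}, b_1,…,b_{n-1})`,
i.e. `𝔽_λ` with the parameter `a_n` set to `0`. -/
def fpoly (q : ℂ) (n : ℕ) (a b : ℕ → ℂ) (lam : ℕ → ℕ) (x : ℕ → ℂ) : ℂ :=
  Fpoly q n (fun i => if i = n - 1 then 0 else a i) b lam x

/-- `ψ_λ(a_1,…,a_m, b_1,…,b_m)`. -/
def psiP (q : ℂ) (m : ℕ) (a b : ℕ → ℂ) (lam : ℕ → ℕ) : ℂ :=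
  ∏ r ∈ Finset.range m,
    qPochInt q (a r * b r) ((lam r : ℤ) - (lam (r + 1) : ℤ))
      / qPochInt q q ((lam r : ℤ) - (lam (r + 1) : ℤ))

/-- `H_q(x_1,…,x_N; y_1,…,y_M) = ∏ 1/(x_i y_j;q)_∞`. -/
def Hq (q : ℂ) (N M : ℕ) (x y : ℕ → ℂ) : ℂ :=
  ∏ i ∈ Finset.range N, ∏ j ∈ Finset.range M, (qPochInf q (x i * y j))⁻¹

/-- `E(x_1,…,x_N; y_1,…,y_M) = ∏ (1 + x_i y_j)`. -/
def Efn (N M : ℕ) (x y : ℕ → ℂ) : ℂ :=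
  ∏ i ∈ Finset.range N, ∏ j ∈ Finset.range M, (1 + x i * y j)

/-- The density `Δ(z_1,…,z_n)`. -/
def DeltaPlain (q : ℂ) (n : ℕ) (z : ℕ → ℂ) : ℂ :=
  (n.factorial : ℂ)⁻¹
    * (∏ i ∈ Finset.range n, ∏ j ∈ Finset.range n,
        if i = j then 1 else qPochInf q (z i / z j))
    * ∏ i ∈ Finset.range n, (2 * (Real.pi : ℂ) * Complex.I * z i)⁻¹

/-- The density `Δ(z_1,…,z_n | a_1,…,a_{n-1}, b_1,…,b_{n-1})`. -/
def DeltaAB (q : ℂ) (n : ℕ) (a b : ℕ → ℂ) (z : ℕ → ℂ) : ℂ :=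
  Hq q n (n - 1) (fun i => (z i)⁻¹) a * Hq q n (n - 1) z b
    * (∏ k ∈ Finset.range (n - 1), qPochInf q (a k * b k))
    / Hq q (n - 1) (n - 1) a b * DeltaPlain q n z

/-- The torus scalar product `⟪f | g⟫_n` with density `Δ(z | a, b)`:
the first slot is evaluated at `z`, the second at the inverses `z̄`. -/
def sprod (q : ℂ) (n : ℕ) (a b : ℕ → ℂ) (f g : (ℕ → ℂ) → ℂ) : ℂ :=
  torusIntegral
    (fun z : Fin n → ℂ =>
      f (extC z) * g (fun i => (extC z i)⁻¹) * DeltaAB q n a b (extC z))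
    0 (fun _ => 1)

/-- The norm constant `c_n(λ | a, b)`. -/
def cnorm (q : ℂ) (n : ℕ) (a b : ℕ → ℂ) (lam : ℕ → ℕ) : ℂ :=
  ∏ k ∈ Finset.range (n - 1),
    qPochInf q (a k * b k) / qPochInf q q
      * (qPochInt q q ((lam k : ℤ) - (lam (k + 1) : ℤ))
          / qPochInt q (a k * b k) ((lam k : ℤ) - (lam (k + 1) : ℤ)))

/-- Number of nonzero parts among the first `m` parts. -/
def ellLen (m : ℕ) (lam : ℕ → ℕ) : ℕ := ((Finset.range m).filter fun i => lam i ≠ 0).card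

/-- Conjugate (transposed) partition, counting parts among the first `m`. -/
def conjP (m : ℕ) (lam : ℕ → ℕ) : ℕ → ℕ :=
  fun i => ((Finset.range m).filter fun j => i + 1 ≤ lam j).card

/-- `φ_k(u | a, b)` entering the spin Hall–Littlewood functions. -/
def phiHL (q : ℂ) (a b : ℕ → ℂ) (k : ℕ) (u : ℂ) : ℂ :=
  (-1 : ℂ) ^ k * (u / (1 - a (k - 1) * u))
    * ∏ j ∈ Finset.range (k - 1), (u - b j) / (1 - a j * u)

/-- Variables permuted by `σ ∈ S_m`. -/
def permVar (m : ℕ) (σ : Equiv.Perm (Fin m)) (u : ℕ → ℂ) : ℕ → ℂ :=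
  fun i => if h : i < m then u ((σ ⟨i, h⟩ : Fin m) : ℕ) else u i

/-- The spin Hall–Littlewood rational function `F̄_λ(u_1,…,u_m | a, b)`. -/
def FbarHL (q : ℂ) (m : ℕ) (a b : ℕ → ℂ) (lam : ℕ → ℕ) (u : ℕ → ℂ) : ℂ :=
  (1 - q) ^ m / qPochInt q q ((m - ellLen m lam : ℕ) : ℤ)
    * psiP q (lam 0) a b (conjP m lam)
    * ∑ σ : Equiv.Perm (Fin m),
        (∏ α ∈ Finset.range m, ∏ β ∈ Finset.range m,
            if α < β then
              (permVar m σ u α - q * permVar m σ u β)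
                / (permVar m σ u α - permVar m σ u β)
            else 1)
          * ∏ i ∈ Finset.range (ellLen m lam), phiHL q a b (lam i) (permVar m σ u i)

/-- The `q`-difference operator `𝔇_{c_1,…,c_{n-1}}`. -/
def Dop (q : ℂ) (n : ℕ) (c : ℕ → ℂ) (f : (ℕ → ℂ) → ℂ) (x : ℕ → ℂ) : ℂ :=
  ∑ i ∈ Finset.range n,
    (∏ r ∈ Finset.range (n - 1), (1 - x i * c r))
      * (∏ j ∈ Finset.range n, if j = i then 1 else (1 - x i / x j)⁻¹)
      * f (Function.update x i (q * x i))

/-- The conjugate `q`-difference operator `𝔇̄_{c_1,…,c_{n-1}}`. -/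
def Dbarop (q : ℂ) (n : ℕ) (c : ℕ → ℂ) (f : (ℕ → ℂ) → ℂ) (x : ℕ → ℂ) : ℂ :=
  ∑ i ∈ Finset.range n,
    (∏ r ∈ Finset.range (n - 1), (1 - c r / x i))
      * (∏ j ∈ Finset.range n, if j = i then 1 else (1 - x j / x i)⁻¹)
      * f (Function.update x i (q⁻¹ * x i))

open Classical in
/-- Single-variable skew spin `q`-Whittaker Laurent polynomial for signatures
(`λ` of length `n`, `μ` of length `n-1`). -/
def skewfZ (q : ℂ) (n : ℕ) (a b : ℕ → ℂ) (lam mu : ℕ → ℤ) (x : ℂ) : ℂ :=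
  if ∀ i, i < n - 1 → mu i ≤ lam i ∧ lam (i + 1) ≤ mu i then
    x ^ ((∑ i ∈ Finset.range n, lam i) - ∑ i ∈ Finset.range (n - 1), mu i)
      * ∏ r ∈ Finset.range (n - 1),
          qPochInt q (a r / x) (lam r - mu r) * qPochInt q (x * b r) (mu r - lam (r + 1))
            * qPochInt q q (lam r - lam (r + 1))
            / (qPochInt q q (lam r - mu r) * qPochInt q q (mu r - lam (r + 1))
                * qPochInt q (a r * b r) (lam r - lam (r + 1)))
  else 0

/-- The spin `q`-Whittaker Laurent polynomial `𝕗_λ(x_1,…,x_n | a, b)` indexed by a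
signature `λ ∈ ℤ^n`, defined through the branching rule. -/
def fpolyZ (q : ℂ) : ℕ → (ℕ → ℂ) → (ℕ → ℂ) → (ℕ → ℤ) → (ℕ → ℂ) → ℂ
  | 0, _, _, _, _ => 1
  | 1, _, _, lam, x => x 0 ^ lam 0
  | n + 2, a, b, lam, x =>
      ∑ m : Fin (n + 1) → ↥(Finset.Icc (lam (n + 1)) (lam 0)),
        fpolyZ q (n + 1) (fun i => a (i + 1)) b
            (fun i => if h : i < n + 1 then ((m ⟨i, h⟩ : ℤ)) else 0) x
          * skewfZ q (n + 2) a b lam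
              (fun i => if h : i < n + 1 then ((m ⟨i, h⟩ : ℤ)) else 0) (x (n + 1))

/-- The type of all integer partitions `𝕐` (weakly decreasing, eventually zero). -/
abbrev PartitionF : Type :=
  {lam : ℕ → ℕ // (∀ i, lam (i + 1) ≤ lam i) ∧ ∃ N, ∀ i, N ≤ i → lam i = 0}

/-- The type `𝕐_n` of partitions of length at most `n`. -/
abbrev YFin (n : ℕ) : Type :=
  {lam : ℕ → ℕ // (∀ i, lam (i + 1) ≤ lam i) ∧ ∀ i, n ≤ i → lam i = 0}

/-- Weakly decreasing tuples in `{0,…,m}^n`, i.e. partitions in `Box(m, n)`. -/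
def decFinset (n m : ℕ) : Finset (Fin n → Fin (m + 1)) :=
  Finset.univ.filter fun f => ∀ i j : Fin n, i ≤ j → f j ≤ f i

/-- Functions `(ℕ → ℂ) → ℂ` given by a symmetric polynomial in the first `n` variables. -/
def symPolyFunSet (n : ℕ) : Set ((ℕ → ℂ) → ℂ) :=
  {f | ∃ p : MvPolynomial (Fin n) ℂ, p.IsSymmetric ∧
        ∀ x : ℕ → ℂ, f x = MvPolynomial.eval (fun i : Fin n => x i) p}

open Classical in
/-- The monomial symmetric polynomial `m_μ(x_1,…,x_m)`. -/
def msym (m : ℕ) (mu : ℕ → ℕ) (x : ℕ → ℂ) : ℂ :=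
  ∑ α ∈ (Finset.univ : Finset (Fin m → Fin (mu 0 + 1))).filter
      (fun α => ∃ σ : Equiv.Perm (Fin m), ∀ i : Fin m, (α i : ℕ) = mu (σ i)),
    ∏ i : Fin m, x (i : ℕ) ^ (α i : ℕ)

/-- Reverse lexicographic order `μ ≤ λ` on partitions. -/
def RevLexLE (mu lam : ℕ → ℕ) : Prop :=
  mu = lam ∨ ∃ i, (∀ j, j < i → mu j = lam j) ∧ mu i < lam i

/-- Insert the value `0` at position `i` into the list of variables `x`. -/
def insertVar (i : ℕ) (x : ℕ → ℂ) : ℕ → ℂ :=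
  fun j => if j < i then x j else if j = i then 0 else x (j - 1)

/-- `f` is (the evaluation of) a symmetric Laurent polynomial in the first `n` variables. -/
def IsSymLaurent (n : ℕ) (f : (ℕ → ℂ) → ℂ) : Prop :=
  ∃ (N : ℕ) (p : MvPolynomial (Fin n) ℂ), p.IsSymmetric ∧
    ∀ x : ℕ → ℂ, (∀ i, i < n → x i ≠ 0) →
      f x = ((∏ i ∈ Finset.range n, x i)⁻¹) ^ N
        * MvPolynomial.eval (fun i : Fin n => x i) p

/-- Inhomogeneous symmetric Grothendieck polynomial (bialternant formula). -/
def Gpoly (n : ℕ) (b : ℕ → ℂ) (lam : ℕ → ℕ) (x : ℕ → ℂ) : ℂ :=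
  Matrix.det (Matrix.of fun i j : Fin n =>
      x (i : ℕ) ^ (lam (j : ℕ) + (n - 1 - (j : ℕ)))
        * ∏ k ∈ Finset.range (j : ℕ), (1 - x (i : ℕ) * b k))
    / Matrix.det (Matrix.of fun i j : Fin n => x (i : ℕ) ^ (n - 1 - (j : ℕ)))

/-- Dual inhomogeneous symmetric Grothendieck polynomial (bialternant formula). -/
def GbarPoly (n : ℕ) (b : ℕ → ℂ) (lam : ℕ → ℕ) (x : ℕ → ℂ) : ℂ :=
  Matrix.det (Matrix.of fun i j : Fin n =>
      x (i : ℕ) ^ lam (j : ℕ)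
        * ∏ k ∈ Finset.range (n - 1 - (j : ℕ)), (x (i : ℕ) - b (n - 2 - k)))
    / Matrix.det (Matrix.of fun i j : Fin n => x (i : ℕ) ^ (n - 1 - (j : ℕ)))

/-- The torus scalar product `⟨f | g⟩_{n,b}` for Grothendieck polynomials. -/
def sprodG (n : ℕ) (b : ℕ → ℂ) (f g : (ℕ → ℂ) → ℂ) : ℂ :=
  torusIntegral
    (fun z : Fin n → ℂ =>
      (n.factorial : ℂ)⁻¹ * f (extC z) * g (fun i => (extC z i)⁻¹)
        * (∏ i ∈ Finset.range n, ∏ j ∈ Finset.range n,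
            if i = j then 1 else 1 - extC z i / extC z j)
        * (∏ i ∈ Finset.range n, ∏ j ∈ Finset.range (n - 1), (1 - extC z i * b j))⁻¹
        * ∏ i ∈ Finset.range n, (2 * (Real.pi : ℂ) * Complex.I * extC z i)⁻¹)
    0 (fun _ => 1)

/-- The torus scalar product `⟪f | g⟫_{n,b}` for interpolation `q`-Whittaker polynomials. -/
def sprodP (q : ℂ) (n : ℕ) (b : ℕ → ℂ) (f g : (ℕ → ℂ) → ℂ) : ℂ :=
  torusIntegral
    (fun z : Fin n → ℂ =>
      (n.factorial : ℂ)⁻¹ * f (extC z) * g (fun i => (extC z i)⁻¹)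
        * (∏ i ∈ Finset.range n, ∏ j ∈ Finset.range n,
            if i = j then 1 else qPochInf q (extC z i / extC z j))
        * (∏ i ∈ Finset.range n, ∏ j ∈ Finset.range (n - 1), qPochInf q (extC z i * b j))⁻¹
        * ∏ i ∈ Finset.range n, (2 * (Real.pi : ℂ) * Complex.I * extC z i)⁻¹)
    0 (fun _ => 1)

end SpinQW

/-!
If `λ_n > 0`, every `μ ≼ λ` in the branching rule has `μ_i ≥ λ_{i+1} > 0`, so removing the first
column of `λ` and of every `μ` matches the nonzero terms of both sides. The factors of
`𝔽_{λ/μ}(x_n)` depend only on differences of parts, except the last one, which is `1` on both sides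
because `a_n = 0`; only the exponent `|λ| - |μ|` changes, dropping by one. Induction on `n` then
collects the factor `x_1 ⋯ x_n`.
-/

section SpinQWShift

open Finset

lemma qPochInt_natCast (q z : ℂ) (m : ℕ) :
    qPochInt q z (m : ℤ) = ∏ i ∈ range m, (1 - z * q ^ i) := by
  simp [qPochInt]

lemma qPochInt_zero_left (q : ℂ) (k : ℤ) : qPochInt q 0 k = 1 := by
  unfold qPochInt; split <;> simp

lemma qPochInt_index_zero (q z : ℂ) : qPochInt q z 0 = 1 := by
  simp [qPochInt]

lemma qPochInt_self_ne_zero {q : ℂ} (hq : ‖q‖ < 1) (m : ℕ) : qPochInt q q m ≠ 0 := by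
  rw [qPochInt_natCast, prod_ne_zero_iff]
  intro i _ h
  have hpow : ‖q‖ ^ (i + 1) = 1 := by
    rw [← norm_pow, pow_succ', ← sub_eq_zero.mp h, norm_one]
  exact (pow_lt_one₀ (norm_nonneg q) hq (Nat.succ_ne_zero i)).ne hpow

lemma interlaces_sub_one_iff {n : ℕ} {lam mu : ℕ → ℕ}
    (hlam : ∀ i, i < n + 1 → 1 ≤ lam i) (hlam0 : ∀ i, n + 1 ≤ i → lam i = 0)
    (hmu : ∀ i, i < n → 1 ≤ mu i) (hmu0 : ∀ i, n ≤ i → mu i = 0) :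
    Interlaces (fun i => mu i - 1) (fun i => lam i - 1) ↔ Interlaces mu lam := by
  refine forall_congr' fun i => ?_
  dsimp only
  rcases lt_or_ge i n with hi | hi
  · have := hmu i hi; have := hlam i (by omega); have := hlam (i + 1) (by omega)
    omega
  · have := hmu0 i hi; have := hlam0 (i + 1) (by omega)
    omega

lemma skewF_sub_one {q : ℂ} (hq : ∀ m : ℕ, qPochInt q q m ≠ 0) {n : ℕ} {a : ℕ → ℂ}
    (ha : a n = 0) (b : ℕ → ℂ) {lam mu : ℕ → ℕ}
    (hlam : ∀ i, i < n + 1 → 1 ≤ lam i) (hlam0 : ∀ i, n + 1 ≤ i → lam i = 0)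
    (hmu : ∀ i, i < n → 1 ≤ mu i) (hmu0 : ∀ i, n ≤ i → mu i = 0) (x : ℂ) :
    skewF q (n + 1) a b lam mu x
      = x * skewF q (n + 1) a b (fun i => lam i - 1) (fun i => mu i - 1) x := by
  by_cases hI : Interlaces mu lam
  swap
  · rw [skewF, skewF, if_neg hI, if_neg (mt (interlaces_sub_one_iff hlam hlam0 hmu hmu0).mp hI),
      mul_zero]
  rw [skewF, skewF, if_pos hI, if_pos ((interlaces_sub_one_iff hlam hlam0 hmu hmu0).mpr hI)]
  have hexp : ∑ i ∈ range (n + 1), (lam i - mu i)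
      = ∑ i ∈ range (n + 1), (lam i - 1 - (mu i - 1)) + 1 := by
    rw [sum_range_succ, sum_range_succ, sum_congr rfl fun r hr =>
      (by have := hmu r (mem_range.mp hr); omega : lam r - mu r = lam r - 1 - (mu r - 1))]
    have := hmu0 n le_rfl; have := hlam n (Nat.lt_succ_self n)
    omega
  have hdiff : ∀ r ∈ range n,
      ((lam r - 1 : ℕ) : ℤ) - ((mu r - 1 : ℕ) : ℤ) = lam r - mu r
        ∧ ((mu r - 1 : ℕ) : ℤ) - ((lam (r + 1) - 1 : ℕ) : ℤ) = mu r - lam (r + 1)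
        ∧ ((lam r - 1 : ℕ) : ℤ) - ((lam (r + 1) - 1 : ℕ) : ℤ) = lam r - lam (r + 1) := by
    intro r hr
    have := mem_range.mp hr; have := hmu r this
    have := hlam r (by omega); have := hlam (r + 1) (by omega)
    omega
  rw [hexp, pow_succ, prod_range_succ, prod_range_succ]
  conv_rhs =>
    rw [prod_congr rfl fun r hr => by rw [(hdiff r hr).1, (hdiff r hr).2.1, (hdiff r hr).2.2]]
  simp only [ha, hmu0 n le_rfl, hlam0 (n + 1) le_rfl, Nat.zero_sub, Nat.cast_zero, sub_zero,
    sub_self, zero_div, zero_mul, qPochInt_zero_left, qPochInt_index_zero, one_mul, mul_one,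
    div_self (hq _)]
  ring

lemma extN_coe {n L : ℕ} (m : Fin n → Fin L) (i : Fin n) : extN m i = m i := by
  simp [extN]

lemma extN_of_le {n L : ℕ} (m : Fin n → Fin L) {i : ℕ} (hi : n ≤ i) : extN m i = 0 := by
  simp [extN, Nat.not_lt.mpr hi]

lemma sum_extN_eq_sum_extN_sub_one {n L : ℕ} (hL : 1 ≤ L) (f g : (ℕ → ℕ) → ℂ)
    (hf : ∀ m : Fin n → Fin (L + 1), (∃ i, (m i : ℕ) = 0) → f (extN m) = 0)
    (hfg : ∀ m : Fin n → Fin (L + 1), (∀ i, 1 ≤ (m i : ℕ)) →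
      f (extN m) = g (fun i => extN m i - 1)) :
    ∑ m : Fin n → Fin (L + 1), f (extN m) = ∑ m : Fin n → Fin (L - 1 + 1), g (extN m) := by
  let raise (m : Fin n → Fin (L - 1 + 1)) : Fin n → Fin (L + 1) :=
    fun i => ⟨m i + 1, by omega⟩
  have hraise (m : Fin n → Fin (L - 1 + 1)) : (fun i => extN (raise m) i - 1) = extN m := by
    funext i
    by_cases hi : i < n
    · simp [extN, hi, raise]
    · simp [extN, hi]
  refine (Fintype.sum_of_injective raise ?_ _ _ ?_ fun m => ?_).symm
  · intro m m' h
    funext i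
    exact Fin.ext (by simpa [raise] using congrArg Fin.val (congrFun h i))
  · intro m hm
    refine hf m (not_forall_not.mp fun hpos => hm ⟨fun i => ⟨m i - 1, by omega⟩, ?_⟩)
    funext i
    exact Fin.ext (by simp only [raise]; have := hpos i; omega)
  · rw [hfg (raise m) fun i => by simp [raise], hraise]

theorem Fpoly_eq_prod_mul_Fpoly_sub_one {q : ℂ} (hq : ∀ m : ℕ, qPochInt q q m ≠ 0)
    (b x : ℕ → ℂ) (n : ℕ) (a : ℕ → ℂ) (lam : ℕ → ℕ) (ha : ∀ i, i + 1 = n → a i = 0)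
    (hlam : ∀ i, i < n → 1 ≤ lam i) (hlam0 : ∀ i, n ≤ i → lam i = 0) :
    Fpoly q n a b lam x = (∏ i ∈ range n, x i) * Fpoly q n a b (fun i => lam i - 1) x := by
  induction n generalizing a lam with
  | zero => simp [Fpoly, hlam0]
  | succ n ih =>
    rw [Fpoly, Fpoly, mul_sum]
    refine sum_extN_eq_sum_extN_sub_one (hlam 0 n.succ_pos)
      (fun mu => Fpoly q n (fun i => a (i + 1)) b mu x * skewF q (n + 1) a b lam mu (x n))
      (fun mu => (∏ i ∈ range (n + 1), x i)
        * (Fpoly q n (fun i => a (i + 1)) b mu x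
          * skewF q (n + 1) a b (fun i => lam i - 1) mu (x n)))
      ?_ fun m hm => ?_
    · rintro m ⟨i, hi⟩
      have hnI : ¬ Interlaces (extN m) lam := fun hI => by
        have hle := (hI i).2
        rw [extN_coe, hi] at hle
        have := hlam (i + 1) (by omega)
        omega
      rw [skewF, if_neg hnI, mul_zero]
    · have hmu : ∀ i, i < n → 1 ≤ extN m i := fun i hi => by
        simpa only [extN, dif_pos hi] using hm ⟨i, hi⟩
      have hmu0 : ∀ i, n ≤ i → extN m i = 0 := fun i hi => extN_of_le m hi
      rw [ih (fun i => a (i + 1)) (extN m) (fun i hi => ha (i + 1) (by omega)) hmu hmu0,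
        skewF_sub_one hq (ha n rfl) b hlam hlam0 hmu hmu0, prod_range_succ]
      ring

end SpinQWShift

theorem fpoly_shift_property_general
    (n : ℕ) (q : ℂ) (hq : ‖q‖ < 1)
    (a b : ℕ → ℂ)
    (lam : ℕ → ℕ)
    (hlam : ∀ i, lam (i + 1) ≤ lam i) (hlam0 : ∀ i, n ≤ i → lam i = 0)
    (hpos : 0 < lam (n - 1)) (x : ℕ → ℂ) :
    fpoly q n a b lam x
      = (∏ i ∈ Finset.range n, x i) * fpoly q n a b (fun i => lam i - 1) x :=
  Fpoly_eq_prod_mul_Fpoly_sub_one (qPochInt_self_ne_zero hq) b x n _ lam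
    (fun i hi => if_pos (by omega))
    (fun i hi => hpos.trans_le (antitone_nat_of_succ_le hlam (by omega))) hlam0

/-- shift property of the spin `q`-Whittaker polynomials. -/
theorem fpoly_shift_property
    (n : ℕ) (hn : 1 ≤ n) (q : ℂ) (hq : ‖q‖ < 1)
    (a b : ℕ → ℂ)
    (ha : ∀ i, i < n - 1 → ‖a i‖ < 1)
    (hb : ∀ i, i < n - 1 → ‖b i‖ < 1)
    (lam : ℕ → ℕ)
    (hlam : ∀ i, lam (i + 1) ≤ lam i) (hlam0 : ∀ i, n ≤ i → lam i = 0)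
    (hpos : 0 < lam (n - 1)) (x : ℕ → ℂ) :
    fpoly q n a b lam x
      = (∏ i ∈ Finset.range n, x i) * fpoly q n a b (fun i => lam i - 1) x :=
  fpoly_shift_property_general n q hq a b lam hlam hlam0 hpos x
end

section
/- Fix n ≥ 1, a complex parameter q with |q| < 1, and inhomogeneity parameters a_1,…,a_{n-1}, b_1,…,b_{n-1} ∈ ℂ with |a_i| < 1 and |b_i| < 1 for all i. For every signature λ = (λ_1 ≥ ⋯ ≥ λ_n) ∈ ℤ^n one has 𝕗_λ(x_1,…,x_n | a_1,…,a_{n-1}, b_1,…,b_{n-1}) = 𝕗_{λ^rev}(x_1^{-1},…,x_n^{-1} | b_{n-1},…,b_1, a_{n-1},…,a_1), where λ^rev = (−λ_n ≥ ⋯ ≥ −λ_1). -/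
open scoped BigOperators

/-!
Reversing a signature, inverting the variable, and exchanging the two parameter sequences while
reversing their order maps the `r`-th factor of the one-variable skew polynomial `𝕗_{λ/μ}` to
its `(n - 1 - r)`-th factor, so `𝕗_{λ/μ}(x | a, b) = 𝕗_{λ^rev/μ^rev}(x⁻¹ | b^rev, a^rev)`.
Since `μ ↦ μ^rev` is a bijection between the signatures interlacing `λ` and those interlacing
`λ^rev`, the identity propagates through the branching rule by induction on `n`.
-/

section Reversal

open Finset

lemma forall_lt_iff_forall_lt_reflect {n : ℕ} {P : ℕ → Prop} :
    (∀ i < n, P i) ↔ ∀ i < n, P (n - 1 - i) :=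
  ⟨fun h i _ => h _ (by omega), fun h i hi => by
    simpa [show n - 1 - (n - 1 - i) = i by omega] using h (n - 1 - i) (by omega)⟩

/- The reversed data are only prescribed on the indices that `skewfZ` and `fpolyZ` read: the
branching rule produces them only up to agreement there. -/
lemma skewfZ_eq_of_reversed (q : ℂ) (n : ℕ) (a b a' b' : ℕ → ℂ) (lam mu lam' mu' : ℕ → ℤ)
    (x : ℂ) (ha : ∀ i < n, a' i = b (n - 1 - i)) (hb : ∀ i < n, b' i = a (n - 1 - i))
    (hlam : ∀ i < n + 1, lam' i = -lam (n - i)) (hmu : ∀ i < n, mu' i = -mu (n - 1 - i)) :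
    skewfZ q (n + 1) a b lam mu x = skewfZ q (n + 1) a' b' lam' mu' x⁻¹ := by
  have hlam_succ : ∀ i < n, lam' (i + 1) = -lam (n - 1 - i) := fun i hi => by
    rw [hlam (i + 1) (by omega), show n - (i + 1) = n - 1 - i by omega]
  have hlam_rev : ∀ i < n, lam' i = -lam (n - 1 - i + 1) := fun i hi => by
    rw [hlam i (by omega), show n - 1 - i + 1 = n - i by omega]
  have interlacing : (∀ i < n, mu i ≤ lam i ∧ lam (i + 1) ≤ mu i) ↔
      ∀ i < n, mu' i ≤ lam' i ∧ lam' (i + 1) ≤ mu' i := by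
    rw [forall_lt_iff_forall_lt_reflect]
    refine forall₂_congr fun i hi => ?_
    rw [hmu i hi, hlam_rev i hi, hlam_succ i hi, neg_le_neg_iff, neg_le_neg_iff, and_comm]
  have sum_lam : ∑ i ∈ range (n + 1), lam' i = -∑ i ∈ range (n + 1), lam i := by
    rw [← sum_range_reflect lam, ← sum_neg_distrib]
    refine sum_congr rfl fun i hi => ?_
    rw [hlam i (mem_range.mp hi), Nat.add_sub_cancel]
  have sum_mu : ∑ i ∈ range n, mu' i = -∑ i ∈ range n, mu i := by
    rw [← sum_range_reflect mu, ← sum_neg_distrib]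
    exact sum_congr rfl fun i hi => hmu i (mem_range.mp hi)
  unfold skewfZ
  simp only [Nat.add_sub_cancel]
  rw [if_congr interlacing rfl rfl, sum_lam, sum_mu, inv_zpow', neg_sub_neg, neg_sub]
  congr 2
  rw [← prod_range_reflect _ n]
  refine prod_congr rfl fun r hr => ?_
  have hr := mem_range.mp hr
  rw [ha r hr, hb r hr, hmu r hr, hlam_rev r hr, hlam_succ r hr]
  generalize n - 1 - r = j
  rw [div_inv_eq_mul, ← div_eq_inv_mul, neg_sub_neg, neg_sub_neg, neg_sub_neg, mul_comm (b j),
    mul_comm (b j)]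
  ring

lemma fpolyZ_eq_of_reversed (q : ℂ) (N : ℕ) (a b a' b' : ℕ → ℂ) (lam lam' : ℕ → ℤ)
    (x x' : ℕ → ℂ) (ha : ∀ i < N - 1, a' i = b (N - 2 - i))
    (hb : ∀ i < N - 1, b' i = a (N - 2 - i)) (hlam : ∀ i < N, lam' i = -lam (N - 1 - i))
    (hx : ∀ i < N, x' i = (x i)⁻¹) :
    fpolyZ q N a b lam x = fpolyZ q N a' b' lam' x' := by
  induction N using Nat.twoStepInduction generalizing a b a' b' lam lam' x x' with
  | zero => rfl
  | one =>
    show x 0 ^ lam 0 = x' 0 ^ lam' 0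
    rw [hx 0 one_pos, hlam 0 one_pos, inv_zpow', neg_neg]
  | more n _ ih =>
    simp only [Nat.add_sub_cancel, Nat.add_succ_sub_one] at ha hb hlam
    have hlam_ends : lam' 0 = -lam (n + 1) ∧ lam' (n + 1) = -lam 0 := by
      simp [hlam]
    let e : (Fin (n + 1) → Finset.Icc (lam (n + 1)) (lam 0)) ≃
        (Fin (n + 1) → Finset.Icc (lam' (n + 1)) (lam' 0)) :=
      Fin.revPerm.arrowCongr <| (Equiv.neg ℤ).subtypeEquiv fun v => by
        simp only [mem_Icc, hlam_ends, Equiv.neg_apply]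
        omega
    rw [fpolyZ, fpolyZ]
    refine Fintype.sum_equiv e _ _ fun m => ?_
    have hmu : ∀ i < n + 1, (if h : i < n + 1 then ((e m ⟨i, h⟩ : ℤ)) else 0)
        = -(if h : n - i < n + 1 then ((m ⟨n - i, h⟩ : ℤ)) else 0) := fun i hi => by
      simp [e, hi, show n - i < n + 1 by omega, Fin.rev]
    congr 1
    · exact ih _ _ _ _ _ _ _ _ (fun i hi => by rw [ha (i + 1) (by omega)]; congr 1; omega)
        (fun i hi => by rw [hb i (by omega)]; congr 1; omega) hmu
        (fun i hi => hx i (by omega))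
    · rw [hx (n + 1) (by omega)]
      exact skewfZ_eq_of_reversed q (n + 1) _ _ _ _ _ _ _ _ _ ha hb hlam hmu

end Reversal

theorem fpolyZ_reverse_symmetry_general
    (n : ℕ) (q : ℂ)
    (a b : ℕ → ℂ)
    (lam : ℕ → ℤ)
    (x : ℕ → ℂ) :
    fpolyZ q n a b lam x
      = fpolyZ q n (fun i => b (n - 2 - i)) (fun i => a (n - 2 - i))
          (fun i => -lam (n - 1 - i)) (fun i => (x i)⁻¹) :=
  fpolyZ_eq_of_reversed q n a b _ _ lam _ x _ (fun _ _ => rfl) (fun _ _ => rfl)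
    (fun _ _ => rfl) (fun _ _ => rfl)

/-- reverse symmetry of the spin `q`-Whittaker Laurent polynomials
indexed by signatures. -/
theorem fpolyZ_reverse_symmetry
    (n : ℕ) (hn : 1 ≤ n) (q : ℂ) (hq : ‖q‖ < 1)
    (a b : ℕ → ℂ)
    (ha : ∀ i, i < n - 1 → ‖a i‖ < 1)
    (hb : ∀ i, i < n - 1 → ‖b i‖ < 1)
    (lam : ℕ → ℤ) (hlam : ∀ i, i + 1 < n → lam (i + 1) ≤ lam i)
    (x : ℕ → ℂ) (hx : ∀ i, i < n → x i ≠ 0) :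
    fpolyZ q n a b lam x
      = fpolyZ q n (fun i => b (n - 2 - i)) (fun i => a (n - 2 - i))
          (fun i => -lam (n - 1 - i)) (fun i => (x i)⁻¹) :=
  fpolyZ_reverse_symmetry_general n q a b lam x
end
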